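/- arXiv:1903.00176 — 2 statements merged into one kernel-verified Lean document; each statement's English description precedes it below -/
import Mathlib

section
/- For every real c > -1 and every integer n ≥ 0, the (n+1)×(n+1) determinant det_{0≤k,ℓ≤n}( Γ(c+k+ℓ+1) ) equals ∏_{j=0}^{n} Γ(c+j+1) Γ(j+1). -/
/-!
Write `Γ(c + k + ℓ + 1) = Γ(c + ℓ + 1) · (c + ℓ + 1)^{(k)}` with the rising factorial
`x^{(k)} = x (x + 1) ⋯ (x + k - 1)`. Pulling `Γ(c + ℓ + 1)` out of column `ℓ` leaves the matrix
of the monic polynomials `X^{(k)}` of degree `k` evaluated at the nodes `c + ℓ + 1`, whose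
determinant is the Vandermonde determinant of these nodes. Equally spaced nodes give
`∏_{i<j≤n} (j - i) = ∏_{j≤n} j! = ∏_{j≤n} Γ(j + 1)`.
-/

open Finset Polynomial Matrix

theorem Real.Gamma_add_nat_eq_mul_ascPochhammer {x : ℝ} (hx : ∀ m : ℕ, x ≠ -m) (k : ℕ) :
    Real.Gamma (x + k) = Real.Gamma x * (ascPochhammer ℝ k).eval x := by
  induction k with
  | zero => simp
  | succ k ih =>
    have hxk : x + k ≠ 0 := fun h => hx k (eq_neg_of_add_eq_zero_left h)
    rw [Nat.cast_succ, ← add_assoc, Real.Gamma_add_one hxk, ih, ascPochhammer_succ_right,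
      eval_mul, eval_add, eval_X, eval_natCast]
    ring

theorem det_gamma_add_eq_prod_mul_det_vandermonde {m : ℕ} (v : Fin m → ℝ)
    (hv : ∀ l (j : ℕ), v l ≠ -j) :
    (of fun k l : Fin m => Real.Gamma (v l + k)).det
      = (∏ l, Real.Gamma (v l)) * (vandermonde v).det := by
  have hfactor : (of fun k l : Fin m => Real.Gamma (v l + k))
      = of fun k l : Fin m => Real.Gamma (v l) * (ascPochhammer ℝ k).eval (v l) := by
    ext k l
    exact Real.Gamma_add_nat_eq_mul_ascPochhammer (hv l) k
  rw [hfactor, det_mul_row (fun l => Real.Gamma (v l))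
      (fun k l : Fin m => (ascPochhammer ℝ k).eval (v l)),
    det_eval_matrixOfPolynomials_eq_det_vandermonde v (fun k => ascPochhammer ℝ k)
      (fun k => ascPochhammer_natDegree ℝ k) (fun k => monic_ascPochhammer ℝ k), ← det_transpose]
  rfl

theorem det_vandermonde_add_natCast (n : ℕ) (a : ℝ) :
    (vandermonde fun l : Fin (n + 1) => a + l).det = n.superFactorial := by
  simpa only [add_comm a] using
    (det_vandermonde_add (fun l : Fin (n + 1) => (l : ℝ)) a).trans
      (det_vandermonde_id_eq_superFactorial n)

/-- For `c > -1` and `n ≥ 0`, `det_{0≤k,ℓ≤n}(Γ(c+k+ℓ+1)) = ∏_{j=0}^n Γ(c+j+1)Γ(j+1)`. -/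
theorem gamma_hankel_det (c : ℝ) (hc : -1 < c) (n : ℕ) :
    (Matrix.of fun k l : Fin (n + 1) => Real.Gamma (c + k + l + 1)).det
      = ∏ j ∈ Finset.range (n + 1), Real.Gamma (c + j + 1) * Real.Gamma ((j : ℝ) + 1) := by
  have hnodes : ∀ (l : Fin (n + 1)) (j : ℕ), c + 1 + l ≠ -j := fun l j => by
    have : (0 : ℝ) ≤ l := Nat.cast_nonneg _
    have : (0 : ℝ) ≤ j := Nat.cast_nonneg _
    linarith
  have hentries : (of fun k l : Fin (n + 1) => Real.Gamma (c + k + l + 1))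
      = of fun k l : Fin (n + 1) => Real.Gamma (c + 1 + l + k) := by
    ext k l
    simp only [of_apply]
    congr 1
    ring
  have hfactorials : ∏ j ∈ range (n + 1), Real.Gamma ((j : ℝ) + 1) = n.superFactorial := by
    rw [← Nat.prod_range_succ_factorial, Nat.cast_prod]
    exact prod_congr rfl fun j _ => Real.Gamma_nat_eq_factorial j
  rw [hentries, det_gamma_add_eq_prod_mul_det_vandermonde _ hnodes, det_vandermonde_add_natCast,
    prod_mul_distrib, hfactorials, Fin.prod_univ_eq_prod_range (fun j => Real.Gamma (c + 1 + j))]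
  simp only [add_right_comm c 1]
end

section
/- Let t > s > 0 be positive integers and N a positive integer. The constants h_ℓ^{(t,s)} := D_ℓ^{(t,s)}/D_{ℓ−1}^{(t,s)} (with D_{−1}^{(t,s)} := 1), where D_n^{(t,s)} = det_{0≤k,ℓ≤n}(∫∫_{ℝ²} y^k κ_{t−s}(y−x) x^ℓ w_{N(s−1),1}(x) dx dy), satisfy h_ℓ^{(t,s)} = ℓ! · Γ(N(s−1)+ℓ+1)/Γ(N(s−1)+1) for all ℓ ≥ 0; in particular h_ℓ^{(t,s)} does not depend on t. -/
open MeasureTheory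

/-- The gamma weight `w_{a,b}(x) = b^{a+1}/Γ(a+1) · x^a e^{-bx}` for `x > 0`,
and `0` otherwise. -/
noncomputable def w (a b x : ℝ) : ℝ :=
  if 0 < x then b ^ (a + 1) / Real.Gamma (a + 1) * x ^ a * Real.exp (-(b * x)) else 0

/-- `κ_τ(x) := w_{Nτ-1,1}(x)`. -/
noncomputable def kappa (N : ℕ) (τ : ℝ) (x : ℝ) : ℝ :=
  w ((N : ℝ) * τ - 1) 1 x

/-- The moment determinant `D_n^{(t,s)} = det_{0≤k,ℓ≤n}(M_{k,ℓ}^{(t,s)})`, where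
`M_{k,ℓ}^{(t,s)} = ∫∫ y^k κ_{t-s}(y-x) x^ℓ w_{N(s-1),1}(x) dx dy`. -/
noncomputable def momentDet (N t s n : ℕ) : ℝ :=
  (Matrix.of fun k l : Fin (n + 1) =>
      ∫ y : ℝ, ∫ x : ℝ,
        y ^ (k : ℕ) * kappa N ((t : ℝ) - s) (y - x) * x ^ (l : ℕ)
          * w ((N : ℝ) * ((s : ℝ) - 1)) 1 x).det

/-!
With `a = N(s-1)` and `m_l = Γ(a+l+1)/Γ(a+1)`, one has `x^l w_{a,1}(x) = m_l w_{a+l,1}(x)`, and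
the Beta integral shows that gamma weights convolve as `w_{b,1} * w_{a,1} = w_{a+b+1,1}`.
Hence the moment `M_{k,l}` equals `m_l` times the `k`-th moment of a gamma weight, i.e. `m_l`
times the rising factorial `(c + l)^{(k)}` with `c = N(t-1)+1`. Rising factorials are monic of
degree `k`, so after pulling out the column factors `m_l` the determinant is the Vandermonde
determinant of the nodes `c, c+1, …, c+n`, which is the superfactorial `∏_{j ≤ n} j!` whatever `c`
is. Thus `D_n = ∏_{j ≤ n} j! m_j`, and `h_l = l! m_l`.
-/

open Real Finset
open scoped Nat

theorem Matrix.det_of_mul_ascPochhammer_eval {R : Type*} [CommRing R] [IsDomain R] (n : ℕ)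
    (c : ℕ → R) (b : R) :
    (Matrix.of fun k l : Fin (n + 1) =>
        c l * (ascPochhammer R k).eval ((l : ℕ) + b)).det
      = ∏ j ∈ range (n + 1), (j ! : R) * c j := by
  set A : Matrix (Fin (n + 1)) (Fin (n + 1)) R :=
    Matrix.of fun k l => (ascPochhammer R k).eval (((l : ℕ) : R) + b)
  have hvdm : A.det = n.superFactorial := by
    have := Matrix.det_eval_matrixOfPolynomials_eq_det_vandermonde
      (fun i : Fin (n + 1) => (i : R) + b) (fun i => ascPochhammer R i)
      (fun i => ascPochhammer_natDegree R i) (fun i => monic_ascPochhammer R i)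
    rw [Matrix.det_vandermonde_add, Matrix.det_vandermonde_id_eq_superFactorial] at this
    rw [← Matrix.det_transpose]
    exact this.symm
  refine (Matrix.det_mul_row (fun l : Fin (n + 1) => c l) A).trans ?_
  rw [hvdm, ← Nat.prod_range_succ_factorial, Nat.cast_prod, prod_mul_distrib, mul_comm,
    Fin.prod_univ_eq_prod_range c]

theorem Real.Gamma_add_nat_div_Gamma {x : ℝ} (hx : 0 < x) (k : ℕ) :
    Gamma (x + k) / Gamma x = (ascPochhammer ℝ k).eval x := by
  induction k with
  | zero => simp [(Gamma_pos_of_pos hx).ne']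
  | succ k ih =>
    have hxk : 0 < x + k := by linarith [k.cast_nonneg (α := ℝ)]
    rw [Nat.cast_succ, ← add_assoc, Gamma_add_one hxk.ne', ascPochhammer_succ_eval,
      ← ih]
    ring

theorem integral_rpow_mul_sub_rpow {a b y : ℝ} (ha : -1 < a) (hb : -1 < b) (hy : 0 < y) :
    ∫ x in (0 : ℝ)..y, x ^ a * (y - x) ^ b
      = Gamma (a + 1) * Gamma (b + 1) / Gamma (a + b + 2) * y ^ (a + b + 1) := by
  have hbeta := Complex.betaIntegral_scaled ((a + 1 : ℝ) : ℂ) ((b + 1 : ℝ) : ℂ) hy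
  rw [Complex.betaIntegral_eq_Gamma_mul_div _ _ (by simpa using by linarith)
    (by simpa using by linarith)] at hbeta
  apply Complex.ofReal_injective
  rw [← intervalIntegral.integral_ofReal]
  convert hbeta using 1
  · refine intervalIntegral.integral_congr fun x hx => ?_
    rw [Set.uIcc_of_le hy.le] at hx
    push_cast
    rw [Complex.ofReal_cpow hx.1, Complex.ofReal_cpow (by linarith [hx.2]), add_sub_cancel_right,
      add_sub_cancel_right, Complex.ofReal_sub]
  · rw [show ((a + 1 : ℝ) : ℂ) + ((b + 1 : ℝ) : ℂ) - 1 = ((a + b + 1 : ℝ) : ℂ) by push_cast; ring,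
      ← Complex.ofReal_cpow hy.le, ← Complex.ofReal_add, Complex.Gamma_ofReal,
      Complex.Gamma_ofReal, Complex.Gamma_ofReal]
    push_cast
    ring_nf

lemma w_of_nonpos {a b x : ℝ} (hx : x ≤ 0) : w a b x = 0 := if_neg hx.not_gt

lemma w_one_of_pos {a x : ℝ} (hx : 0 < x) : w a 1 x = x ^ a * exp (-x) / Gamma (a + 1) := by
  rw [w, if_pos hx, one_rpow, one_mul]; ring

lemma integral_pow_mul_w {a : ℝ} (ha : -1 < a) (k : ℕ) :
    ∫ y, y ^ k * w a 1 y = (ascPochhammer ℝ k).eval (a + 1) := by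
  rw [← Gamma_add_nat_div_Gamma (by linarith),
    Gamma_eq_integral (by linarith [k.cast_nonneg (α := ℝ)]),
    ← integral_div, ← setIntegral_eq_integral_of_forall_compl_eq_zero
      fun y hy => by rw [w_of_nonpos (not_lt.mp hy), mul_zero]]
  refine setIntegral_congr_fun measurableSet_Ioi fun y (hy : 0 < y) => ?_
  rw [w_one_of_pos hy, show a + 1 + k - 1 = k + a by ring, rpow_add hy, rpow_natCast]
  ring

lemma integral_w_sub_mul_w {a b : ℝ} (ha : -1 < a) (hb : -1 < b) (y : ℝ) :
    ∫ x, w b 1 (y - x) * w a 1 x = w (a + b + 1) 1 y := by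
  have hvanish : ∀ x ∉ Set.Ioo 0 y, w b 1 (y - x) * w a 1 x = 0 := fun x hx => by
    rcases le_or_gt x 0 with hx0 | hx0
    · rw [w_of_nonpos hx0, mul_zero]
    · rw [w_of_nonpos (sub_nonpos.mpr (not_lt.mp fun hxy => hx ⟨hx0, hxy⟩)), zero_mul]
  rcases le_or_gt y 0 with hy | hy
  · rw [w_of_nonpos hy, ← setIntegral_eq_integral_of_forall_compl_eq_zero hvanish,
      Set.Ioo_eq_empty (by linarith), Measure.restrict_empty, integral_zero_measure]
  have hΓa := Gamma_pos_of_pos (show 0 < a + 1 by linarith)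
  have hΓb := Gamma_pos_of_pos (show 0 < b + 1 by linarith)
  set C := exp (-y) / (Gamma (a + 1) * Gamma (b + 1)) with hC
  calc ∫ x, w b 1 (y - x) * w a 1 x
      = ∫ x in Set.Ioo 0 y, C * (x ^ a * (y - x) ^ b) := by
        rw [← setIntegral_eq_integral_of_forall_compl_eq_zero hvanish]
        refine setIntegral_congr_fun measurableSet_Ioo fun x ⟨hx0, hxy⟩ => ?_
        rw [hC, w_one_of_pos (sub_pos.mpr hxy), w_one_of_pos hx0,
          show exp (-y) = exp (-(y - x)) * exp (-x) by rw [← exp_add]; ring_nf]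
        ring
    _ = C * ∫ x in (0 : ℝ)..y, x ^ a * (y - x) ^ b := by
        rw [integral_const_mul, ← integral_Ioc_eq_integral_Ioo,
          ← intervalIntegral.integral_of_le hy.le]
    _ = w (a + b + 1) 1 y := by
        rw [integral_rpow_mul_sub_rpow ha hb hy, w_one_of_pos hy,
          show a + b + 1 + 1 = a + b + 2 by ring, hC]
        field_simp

lemma pow_mul_w {a : ℝ} (ha : -1 < a) (l : ℕ) (x : ℝ) :
    x ^ l * w a 1 x = Gamma (a + 1 + l) / Gamma (a + 1) * w (a + l) 1 x := by
  rcases le_or_gt x 0 with hx | hx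
  · simp only [w_of_nonpos hx, mul_zero]
  · have := (Gamma_pos_of_pos (show 0 < a + 1 + l by linarith [l.cast_nonneg (α := ℝ)])).ne'
    rw [w_one_of_pos hx, w_one_of_pos hx, show a + l + 1 = a + 1 + l by ring, rpow_add hx,
      rpow_natCast]
    field_simp

lemma integral_integral_pow_mul_w_sub_mul_pow_mul_w {a b : ℝ} (ha : -1 < a) (hb : -1 < b)
    (k l : ℕ) :
    ∫ y, ∫ x, y ^ k * w b 1 (y - x) * x ^ l * w a 1 x
      = Gamma (a + 1 + l) / Gamma (a + 1) * (ascPochhammer ℝ k).eval (l + (a + b + 2)) := by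
  set m := Gamma (a + 1 + l) / Gamma (a + 1)
  have hal : -1 < a + l := by linarith [l.cast_nonneg (α := ℝ)]
  have hinner : ∀ y, ∫ x, y ^ k * w b 1 (y - x) * x ^ l * w a 1 x
      = m * (y ^ k * w (a + l + b + 1) 1 y) := fun y => by
    calc ∫ x, y ^ k * w b 1 (y - x) * x ^ l * w a 1 x
        = ∫ x, y ^ k * m * (w b 1 (y - x) * w (a + l) 1 x) := by
          congr 1 with x
          rw [mul_assoc _ (x ^ l), pow_mul_w ha]
          ring
      _ = m * (y ^ k * w (a + l + b + 1) 1 y) := by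
          rw [integral_const_mul, integral_w_sub_mul_w hal hb]
          ring
  simp only [hinner]
  rw [integral_const_mul, integral_pow_mul_w (by linarith),
    show a + l + b + 1 + 1 = l + (a + b + 2) by ring]

theorem momentDet_eq_prod {N t s : ℕ} (hN : 0 < N) (hs : 0 < s) (hst : s < t) (n : ℕ) :
    momentDet N t s n = ∏ j ∈ range (n + 1),
      (j ! : ℝ) * (Gamma (N * (s - 1 : ℝ) + 1 + j) / Gamma (N * (s - 1 : ℝ) + 1)) := by
  have ha : -1 < (N : ℝ) * (s - 1) := by
    have : (1 : ℝ) ≤ s := by exact_mod_cast hs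
    nlinarith [N.cast_nonneg (α := ℝ)]
  have hb : -1 < (N : ℝ) * (t - s) - 1 := by
    have : (s : ℝ) < t := by exact_mod_cast hst
    have : (1 : ℝ) ≤ N := by exact_mod_cast hN
    nlinarith
  rw [momentDet, ← Matrix.det_of_mul_ascPochhammer_eval n
    (fun j => Gamma (N * (s - 1 : ℝ) + 1 + j) / Gamma (N * (s - 1 : ℝ) + 1))
    (N * (s - 1 : ℝ) + (N * (t - s : ℝ) - 1) + 2)]
  congr 1 with k l
  exact integral_integral_pow_mul_w_sub_mul_pow_mul_w ha hb k l

/-- The constants `h_ℓ^{(t,s)} = D_ℓ^{(t,s)}/D_{ℓ-1}^{(t,s)}` (with `D_{-1} := 1`)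
equal `ℓ! Γ(N(s-1)+ℓ+1)/Γ(N(s-1)+1)`; in particular they do not depend on `t`. -/
theorem lup_h_const (N : ℕ) (hN : 0 < N) (t s : ℕ) (hs : 0 < s) (hst : s < t) (l : ℕ) :
    momentDet N t s l / (if l = 0 then 1 else momentDet N t s (l - 1))
      = (l.factorial : ℝ) * Real.Gamma ((N : ℝ) * ((s : ℝ) - 1) + l + 1)
          / Real.Gamma ((N : ℝ) * ((s : ℝ) - 1) + 1) := by
  set a : ℝ := N * (s - 1 : ℝ)
  set h : ℕ → ℝ := fun j => (j ! : ℝ) * (Gamma (a + 1 + j) / Gamma (a + 1))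
  have ha : 0 ≤ a := mul_nonneg N.cast_nonneg (sub_nonneg.mpr (by exact_mod_cast hs))
  have hpos : ∀ j : ℕ, 0 < h j := fun j => by positivity
  have hprev : (if l = 0 then 1 else momentDet N t s (l - 1)) = ∏ j ∈ range l, h j := by
    rcases l with _ | l
    · simp
    · rw [if_neg l.succ_ne_zero, Nat.add_sub_cancel]
      exact momentDet_eq_prod hN hs hst l
  rw [hprev, momentDet_eq_prod hN hs hst, prod_range_succ,
    mul_div_cancel_left₀ _ (prod_pos fun j _ => hpos j).ne', add_right_comm, mul_div_assoc]
end
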